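/- Let p > 1, δ ≥ 0, φ'(t) = (δ+t)^{p-2} t, and for a ∈ ℝ^d let φ_{|a|} denote the shift of φ by |a| and (φ_{|a|})* its Fenchel conjugate. Then there exist constants c, C > 0 depending only on p such that for all a ∈ ℝ^d and λ ∈ [0,1]: c·λ²·φ(|a|) ≤ (φ_{|a|})*(λ·φ'(|a|)) ≤ C·λ²·φ(|a|). -/
import Mathlib


/-- `φ(t) = ∫₀ᵗ (δ+s)^(p-2) s ds`. -/
noncomputable def phiFn (p δ t : ℝ) : ℝ :=
  ∫ s in (0:ℝ)..t, (δ + s) ^ (p - 2) * s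

/-- The Fenchel conjugate `ψ*(t) = sup_{s ≥ 0} (s t − ψ s)`. -/
noncomputable def fconj (ψ : ℝ → ℝ) (t : ℝ) : ℝ :=
  sSup ((fun s => s * t - ψ s) '' Set.Ici 0)

/-- The shifted N-function `φ_c(t) = ∫₀ᵗ φ'(c+s) · s/(c+s) ds`, where
`φ'(r) = (δ+r)^(p-2) r`. -/
noncomputable def shiftPhi (p δ c t : ℝ) : ℝ :=
  ∫ s in (0:ℝ)..t, ((δ + (c + s)) ^ (p - 2) * (c + s)) * (s / (c + s))

open Real MeasureTheory Set

section Aux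

/-- The integrand `s ↦ (D+s)^(p-2) * s` is monotone on `[0,∞)` when `D ≥ 0`, `p > 1`. -/
lemma aux_hmono {p D : ℝ} (hp : 1 < p) (hD : 0 ≤ D) :
    MonotoneOn (fun s : ℝ => (D + s) ^ (p - 2) * s) (Set.Ici 0) := by
  intro x hx y hy hxy
  simp only [Set.mem_Ici] at hx hy
  rcases eq_or_lt_of_le hx with h0 | hx0
  · have : x = 0 := h0.symm
    subst this
    simpa using mul_nonneg (Real.rpow_nonneg (by linarith) _) hy
  · have hy0 : 0 < y := lt_of_lt_of_le hx0 hxy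
    have hDx : 0 < D + x := by linarith
    have hDy : 0 < D + y := by linarith
    have ex : (D + x) ^ (p - 2) * x = (D + x) ^ (p - 1) * (x / (D + x)) := by
      rw [show p - 2 = (p - 1) - 1 by ring, Real.rpow_sub hDx, Real.rpow_one]
      field_simp
    have ey : (D + y) ^ (p - 2) * y = (D + y) ^ (p - 1) * (y / (D + y)) := by
      rw [show p - 2 = (p - 1) - 1 by ring, Real.rpow_sub hDy, Real.rpow_one]
      field_simp
    simp only [ex, ey]
    apply mul_le_mul
    · exact Real.rpow_le_rpow (le_of_lt hDx) (by linarith) (by linarith)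
    · rw [div_le_div_iff₀ hDx hDy]; nlinarith
    · positivity
    · positivity

lemma aux_hinteg {p D : ℝ} (hp : 1 < p) (hD : 0 ≤ D) {u v : ℝ} (hu : 0 ≤ u) (huv : u ≤ v) :
    IntervalIntegrable (fun s : ℝ => (D + s) ^ (p - 2) * s) volume u v := by
  apply MonotoneOn.intervalIntegrable
  apply (aux_hmono hp hD).mono
  rw [Set.uIcc_of_le huv]
  exact fun x hx => le_trans hu hx.1

lemma aux_int_lower {p D : ℝ} (hp : 1 < p) (hD : 0 ≤ D) {u v : ℝ} (hu : 0 ≤ u) (huv : u ≤ v) :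
    (v - u) * ((D + u) ^ (p - 2) * u) ≤ ∫ s in u..v, (D + s) ^ (p - 2) * s := by
  have h1 : (v - u) * ((D + u) ^ (p - 2) * u)
      = ∫ _ in u..v, (D + u) ^ (p - 2) * u := by
    rw [intervalIntegral.integral_const, smul_eq_mul]
  rw [h1]
  apply intervalIntegral.integral_mono_on huv (intervalIntegrable_const)
    (aux_hinteg hp hD hu huv)
  intro x hx
  exact aux_hmono hp hD (Set.mem_Ici.2 hu) (Set.mem_Ici.2 (le_trans hu hx.1)) hx.1

lemma aux_int_upper {p D : ℝ} (hp : 1 < p) (hD : 0 ≤ D) {u v : ℝ} (hu : 0 ≤ u) (huv : u ≤ v) :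
    (∫ s in u..v, (D + s) ^ (p - 2) * s) ≤ (v - u) * ((D + v) ^ (p - 2) * v) := by
  have h1 : (v - u) * ((D + v) ^ (p - 2) * v)
      = ∫ _ in u..v, (D + v) ^ (p - 2) * v := by
    rw [intervalIntegral.integral_const, smul_eq_mul]
  rw [h1]
  apply intervalIntegral.integral_mono_on huv (aux_hinteg hp hD hu huv)
    (intervalIntegrable_const)
  intro x hx
  exact aux_hmono hp hD (Set.mem_Ici.2 (le_trans hu hx.1)) (Set.mem_Ici.2 (le_trans hu huv)) hx.2

lemma aux_int_nonneg {p D : ℝ} (hp : 1 < p) (hD : 0 ≤ D) {v : ℝ} (hv : 0 ≤ v) :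
    0 ≤ ∫ s in (0:ℝ)..v, (D + s) ^ (p - 2) * s := by
  have := aux_int_lower hp hD (le_refl 0) hv
  simpa using this

lemma aux_shiftPhi_eq {p δ c : ℝ} (hc : 0 ≤ c) {s : ℝ} (hs : 0 ≤ s) :
    shiftPhi p δ c s = ∫ x in (0:ℝ)..s, ((δ + c) + x) ^ (p - 2) * x := by
  unfold shiftPhi
  apply intervalIntegral.integral_congr
  intro x hx
  rw [Set.uIcc_of_le hs] at hx
  obtain ⟨hx0, _⟩ := hx
  by_cases h : c + x = 0
  · have hx0' : x = 0 := by linarith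
    simp [hx0']
  · have he : δ + (c + x) = (δ + c) + x := by ring
    simp only []
    rw [he]
    field_simp

lemma aux_rpow_half {p : ℝ} (hp : 1 < p) {a b : ℝ} (hb : 0 ≤ b) (h1 : a ≤ 2*b) (h2 : b ≤ a) :
    min 1 ((2:ℝ)^(2-p)) * a^(p-2) ≤ b^(p-2) := by
  have ha : 0 ≤ a := le_trans hb h2
  rcases le_or_gt 2 p with h | h
  · have e1 : (a/2 : ℝ) ^ (p-2) ≤ b ^ (p-2) :=
      Real.rpow_le_rpow (by positivity) (by linarith) (by linarith)
    have e2 : (a/2 : ℝ) ^ (p-2) = a^(p-2) / 2^(p-2) :=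
      Real.div_rpow ha (by norm_num : (0:ℝ) ≤ 2) _
    have e3 : (2:ℝ)^(2-p) * 2^(p-2) = 1 := by
      rw [← Real.rpow_add (by norm_num)]; norm_num
    have h2p : (0:ℝ) < 2^(p-2) := Real.rpow_pos_of_pos (by norm_num) _
    have : min 1 ((2:ℝ)^(2-p)) * a^(p-2) ≤ (2:ℝ)^(2-p) * a^(p-2) := by
      apply mul_le_mul_of_nonneg_right (min_le_right _ _) (Real.rpow_nonneg ha _)
    refine le_trans this (le_trans ?_ e1)
    rw [e2, le_div_iff₀ h2p]
    nlinarith [Real.rpow_nonneg ha (p-2)]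
  · rcases eq_or_lt_of_le hb with hb0 | hb0
    · have ha0 : a = 0 := by linarith
      rw [← hb0, ha0, Real.zero_rpow (by linarith)]
      simp
    · have ha0 : 0 < a := lt_of_lt_of_le hb0 h2
      have e1 : a ^ (p-2) ≤ b ^ (p-2) :=
        (Real.rpow_le_rpow_iff_of_neg ha0 hb0 (by linarith : p-2 < 0)).2 h2
      have : min 1 ((2:ℝ)^(2-p)) * a^(p-2) ≤ 1 * a^(p-2) :=
        mul_le_mul_of_nonneg_right (min_le_left _ _) (Real.rpow_nonneg ha _)
      rw [one_mul] at this
      exact le_trans this e1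

lemma aux_rpow_double {p : ℝ} (hp : 1 < p) {a b : ℝ} (ha : 0 ≤ a) (h1 : a ≤ b) (h2 : b ≤ 2*a) :
    b^(p-2) ≤ max 1 ((2:ℝ)^(p-2)) * a^(p-2) := by
  rcases le_or_gt 2 p with h | h
  · have e1 : b ^ (p-2) ≤ (2*a) ^ (p-2) :=
      Real.rpow_le_rpow (by linarith) h2 (by linarith)
    have e2 : ((2:ℝ)*a) ^ (p-2) = 2^(p-2) * a^(p-2) :=
      Real.mul_rpow (by norm_num) ha
    refine le_trans e1 ?_
    rw [e2]
    exact mul_le_mul_of_nonneg_right (le_max_right _ _) (Real.rpow_nonneg ha _)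
  · rcases eq_or_lt_of_le ha with ha0 | ha0
    · have hb0 : b = 0 := by linarith
      rw [hb0, ← ha0, Real.zero_rpow (by linarith)]
      simp
    · have hb0 : 0 < b := lt_of_lt_of_le ha0 h1
      have e1 : b ^ (p-2) ≤ a ^ (p-2) :=
        (Real.rpow_le_rpow_iff_of_neg hb0 ha0 (by linarith : p-2 < 0)).2 h1
      refine le_trans e1 ?_
      nlinarith [Real.rpow_nonneg ha (p-2), le_max_left (1:ℝ) ((2:ℝ)^(p-2))]

lemma aux_key6 {p δ : ℝ} (hp : 1 < p) (hδ : 0 ≤ δ) {c l : ℝ} (hc : 0 ≤ c) (hl0 : 0 ≤ l)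
    (hl1 : l ≤ 1) :
    l * ((δ+c)^(p-2) * c) ≤ ((δ+c) + (max 1 ((2:ℝ)^((p-1)⁻¹)))*l*c)^(p-2)
      * ((max 1 ((2:ℝ)^((p-1)⁻¹)))*l*c) := by
  set K := max 1 ((2:ℝ)^((p-1)⁻¹)) with hKdef
  have hK1 : 1 ≤ K := le_max_left _ _
  have hK0 : 0 < K := by linarith
  by_cases hlc : l * c = 0
  · have e1 : l * ((δ+c)^(p-2) * c) = (δ+c)^(p-2) * (l*c) := by ring
    have e2 : K*l*c = K*(l*c) := by ring
    rw [e1, e2, hlc]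
    simp
  · have hl : 0 < l := lt_of_le_of_ne hl0 (by rintro rfl; simp at hlc)
    have hc0 : 0 < c := lt_of_le_of_ne hc (by rintro rfl; simp at hlc)
    have hD : 0 < δ + c := by linarith
    set D := δ + c with hDdef
    set u := K*l*c with hudef
    have hu0 : 0 < u := by positivity
    have hcD : c ≤ D := by simp [hDdef]; linarith
    rcases le_or_gt 2 p with h | h
    · have e1 : D^(p-2) ≤ (D+u)^(p-2) :=
        Real.rpow_le_rpow hD.le (by linarith) (by linarith)
      have e2 : l*c ≤ u := by
        rw [hudef]; nlinarith
      have h0 : (0:ℝ) ≤ D^(p-2) := Real.rpow_nonneg hD.le _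
      nlinarith [mul_le_mul e1 e2 (by positivity)
        (Real.rpow_nonneg (by linarith : (0:ℝ) ≤ D+u) _)]
    · -- 1 < p < 2
      have hDu : 0 < D + u := by linarith
      have hKp : (2:ℝ) ≤ K^(p-1) := by
        have : ((2:ℝ)^((p-1)⁻¹))^(p-1) ≤ K^(p-1) :=
          Real.rpow_le_rpow (Real.rpow_nonneg (by norm_num) _) (le_max_right _ _) (by linarith)
        rwa [← Real.rpow_mul (by norm_num : (0:ℝ) ≤ 2),
          inv_mul_cancel₀ (by linarith : p-1 ≠ 0), Real.rpow_one] at this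
      have hDu2K : D + u ≤ 2*K*D := by
        have h9 : u ≤ K*D := by
          rw [hudef]
          have h10 : l*c ≤ D := by nlinarith
          calc K*l*c = K*(l*c) := by ring
            _ ≤ K*D := mul_le_mul_of_nonneg_left h10 hK0.le
        nlinarith
      have key : (D+u)^(2-p) ≤ K * D^(2-p) := by
        have e1 : (D+u)^(2-p) ≤ (2*K*D)^(2-p) :=
          Real.rpow_le_rpow (by linarith) hDu2K (by linarith)
        have e2 : ((2*K)*D)^(2-p) = (2*K)^(2-p) * D^(2-p) :=
          Real.mul_rpow (by positivity) hD.le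
        have e3 : ((2:ℝ)*K)^(2-p) = 2^(2-p) * K^(2-p) := Real.mul_rpow (by norm_num) hK0.le
        have e4 : (2:ℝ)^(2-p) ≤ 2 := by
          have h8 := Real.rpow_le_rpow_of_exponent_le (by norm_num : (1:ℝ) ≤ 2)
            (by linarith : 2-p ≤ 1)
          simpa using h8
        have e5 : 2 * K^(2-p) ≤ K := by
          have h7 : K^(p-1) * K^(2-p) = K := by
            rw [← Real.rpow_add hK0]; norm_num
          nlinarith [Real.rpow_nonneg hK0.le (2-p)]
        have hK2p : 0 ≤ K^(2-p) := Real.rpow_nonneg hK0.le _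
        have hD2p : 0 ≤ D^(2-p) := Real.rpow_nonneg hD.le _
        calc (D+u)^(2-p) ≤ (2*K*D)^(2-p) := e1
          _ = 2^(2-p) * K^(2-p) * D^(2-p) := by
              rw [show (2:ℝ)*K*D = (2*K)*D by ring, e2, e3]
          _ ≤ K * D^(2-p) := by
              nlinarith [mul_le_mul_of_nonneg_right
                (mul_le_mul_of_nonneg_right e4 hK2p) hD2p,
                mul_le_mul_of_nonneg_right e5 hD2p]
      have hA : 0 < (D+u)^(2-p) := Real.rpow_pos_of_pos hDu _
      have hB : 0 < D^(2-p) := Real.rpow_pos_of_pos hD _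
      have eD : D^(p-2) = (D^(2-p))⁻¹ := by
        rw [show p-2 = -(2-p) by ring, Real.rpow_neg hD.le]
      have eDu : (D+u)^(p-2) = ((D+u)^(2-p))⁻¹ := by
        rw [show p-2 = -(2-p) by ring, Real.rpow_neg hDu.le]
      rw [eD, eDu]
      rw [show l * ((D^(2-p))⁻¹ * c) = l*c/(D^(2-p)) by ring,
        show ((D+u)^(2-p))⁻¹ * u = u/((D+u)^(2-p)) by ring,
        div_le_div_iff₀ hB hA]
      rw [hudef]
      nlinarith [key, mul_le_mul_of_nonneg_left key (mul_pos hl hc0).le]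

lemma aux_phi_upper {p δ : ℝ} (hp : 1 < p) (hδ : 0 ≤ δ) {c : ℝ} (hc : 0 ≤ c) :
    phiFn p δ c ≤ c^2 * (δ+c)^(p-2) := by
  have h := aux_int_upper hp hδ (le_refl 0) hc
  unfold phiFn
  calc (∫ s in (0:ℝ)..c, (δ+s)^(p-2)*s) ≤ (c-0)*((δ+c)^(p-2)*c) := h
    _ = c^2*(δ+c)^(p-2) := by ring

lemma aux_phi_lower {p δ : ℝ} (hp : 1 < p) (hδ : 0 ≤ δ) {c : ℝ} (hc : 0 ≤ c) :
    min 1 ((2:ℝ)^(2-p)) / 4 * (c^2 * (δ+c)^(p-2)) ≤ phiFn p δ c := by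
  have hsplit : (∫ s in (0:ℝ)..(c/2), (δ+s)^(p-2)*s) + (∫ s in (c/2)..c, (δ+s)^(p-2)*s)
      = phiFn p δ c :=
    intervalIntegral.integral_add_adjacent_intervals
      (aux_hinteg hp hδ (le_refl 0) (by linarith))
      (aux_hinteg hp hδ (by linarith) (by linarith))
  have h1 : 0 ≤ ∫ s in (0:ℝ)..(c/2), (δ+s)^(p-2)*s := aux_int_nonneg hp hδ (by linarith)
  have h2 := aux_int_lower hp hδ (by linarith : (0:ℝ) ≤ c/2) (by linarith : c/2 ≤ c)
  have h3 : min 1 ((2:ℝ)^(2-p)) * (δ+c)^(p-2) ≤ (δ+c/2)^(p-2) :=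
    aux_rpow_half hp (by linarith) (by linarith) (by linarith)
  have hq : (0:ℝ) ≤ c^2/4 := by positivity
  nlinarith [mul_le_mul_of_nonneg_left h3 hq]

lemma aux_fconj_le {ψ : ℝ → ℝ} {t B : ℝ} (hB : 0 ≤ B)
    (h : ∀ s, 0 ≤ s → s*t - ψ s ≤ B) : fconj ψ t ≤ B := by
  apply Real.sSup_le _ hB
  rintro x ⟨s, hs, rfl⟩
  exact h s hs

lemma aux_le_fconj {ψ : ℝ → ℝ} {t B : ℝ} (s₀ : ℝ) (hs₀ : 0 ≤ s₀)
    (h : ∀ s, 0 ≤ s → s*t - ψ s ≤ B) : s₀*t - ψ s₀ ≤ fconj ψ t := by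
  have hbdd : BddAbove ((fun s => s*t - ψ s) '' Set.Ici 0) := by
    refine ⟨B, ?_⟩
    rintro x ⟨s, hs, rfl⟩
    exact h s hs
  exact le_csSup hbdd ⟨s₀, hs₀, rfl⟩

end Aux

set_option maxHeartbeats 1000000 in
theorem stmt14 (d : ℕ) (p δ : ℝ) (hp : 1 < p) (hδ : 0 ≤ δ) :
    ∃ c > (0:ℝ), ∃ C > (0:ℝ), ∀ a : EuclideanSpace ℝ (Fin d),
      ∀ l : ℝ, 0 ≤ l → l ≤ 1 →
        c * l ^ 2 * phiFn p δ ‖a‖ ≤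
          fconj (shiftPhi p δ ‖a‖) (l * ((δ + ‖a‖) ^ (p - 2) * ‖a‖)) ∧
        fconj (shiftPhi p δ ‖a‖) (l * ((δ + ‖a‖) ^ (p - 2) * ‖a‖)) ≤
          C * l ^ 2 * phiFn p δ ‖a‖ := by
  set K := max 1 ((2:ℝ)^((p-1)⁻¹)) with hKdef
  set M := max 1 ((2:ℝ)^(p-2)) with hMdef
  set m := min 1 ((2:ℝ)^(2-p)) with hmdef
  have hK1 : 1 ≤ K := le_max_left _ _
  have hK0 : 0 < K := by linarith
  have hM1 : 1 ≤ M := le_max_left _ _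
  have hM0 : 0 < M := by linarith
  have hm0 : 0 < m := lt_min one_pos (Real.rpow_pos_of_pos (by norm_num) _)
  have hm1 : m ≤ 1 := min_le_left _ _
  refine ⟨(16*M)⁻¹, inv_pos.mpr (by linarith), 4*K/m, div_pos (by linarith) hm0, ?_⟩
  intro a l hl0 hl1
  set c := ‖a‖ with hcdef
  have hc : 0 ≤ c := norm_nonneg a
  set D := δ + c with hDdef
  have hD0 : 0 ≤ D := by rw [hDdef]; linarith
  have hcD : c ≤ D := by rw [hDdef]; linarith
  have hDp : 0 ≤ D^(p-2) := Real.rpow_nonneg hD0 _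
  have ht0 : 0 ≤ l * (D^(p-2)*c) := mul_nonneg hl0 (mul_nonneg hDp hc)
  have hu0 : 0 ≤ K*l*c := mul_nonneg (mul_nonneg hK0.le hl0) hc
  have hkey : l * (D^(p-2)*c) ≤ (D + K*l*c)^(p-2) * (K*l*c) := by
    rw [hDdef]; exact aux_key6 hp hδ hc hl0 hl1
  have hψ : ∀ s : ℝ, 0 ≤ s → shiftPhi p δ c s = ∫ x in (0:ℝ)..s, (D+x)^(p-2)*x := by
    intro s hs; rw [hDdef]; exact aux_shiftPhi_eq hc hs
  have helem : ∀ s, (0:ℝ) ≤ s →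
      s * (l * (D^(p-2)*c)) - shiftPhi p δ c s ≤ K*l*c * (l * (D^(p-2)*c)) := by
    intro s hs
    rw [hψ s hs]
    rcases le_or_gt s (K*l*c) with h | h
    · have h1 : 0 ≤ ∫ x in (0:ℝ)..s, (D+x)^(p-2)*x := aux_int_nonneg hp hD0 hs
      nlinarith [mul_le_mul_of_nonneg_right h ht0]
    · have hsplit : (∫ x in (0:ℝ)..(K*l*c), (D+x)^(p-2)*x)
          + (∫ x in (K*l*c)..s, (D+x)^(p-2)*x) = ∫ x in (0:ℝ)..s, (D+x)^(p-2)*x :=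
        intervalIntegral.integral_add_adjacent_intervals
          (aux_hinteg hp hD0 (le_refl 0) hu0) (aux_hinteg hp hD0 hu0 h.le)
      have h1 : 0 ≤ ∫ x in (0:ℝ)..(K*l*c), (D+x)^(p-2)*x := aux_int_nonneg hp hD0 hu0
      have h2 := aux_int_lower hp hD0 hu0 h.le
      nlinarith [mul_le_mul_of_nonneg_left hkey (by linarith : (0:ℝ) ≤ s - K*l*c)]
  constructor
  · -- lower bound
    set ε := (4*M)⁻¹ with hεdef
    have hε0 : 0 < ε := by rw [hεdef]; positivity
    have hεeq : ε*(4*M) = 1 := by rw [hεdef]; field_simp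
    have hε1 : ε ≤ 1 := by nlinarith
    have hε2M : ε^2*M = ε/4 := by rw [hεdef]; field_simp
    have h16 : (16*M)⁻¹ = ε/4 := by rw [hεdef]; field_simp; ring
    have hs₀0 : 0 ≤ ε*l*c := mul_nonneg (mul_nonneg hε0.le hl0) hc
    have hεl : ε*l ≤ 1 := by nlinarith
    have hs₀c : ε*l*c ≤ c := by nlinarith [mul_le_mul_of_nonneg_right hεl hc]
    have hle := aux_le_fconj (ψ := shiftPhi p δ c) (t := l * (D^(p-2)*c))
      (B := K*l*c * (l * (D^(p-2)*c))) (ε*l*c) hs₀0 helem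
    refine le_trans ?_ hle
    have F2 : (D + ε*l*c)^(p-2) ≤ M * D^(p-2) := by
      rw [hMdef]
      exact aux_rpow_double hp hD0 (by linarith) (by linarith)
    have F1 : shiftPhi p δ c (ε*l*c) ≤ ε*l*c * ((D + ε*l*c)^(p-2) * (ε*l*c)) := by
      rw [hψ _ hs₀0]
      have h := aux_int_upper hp hD0 (le_refl 0) hs₀0
      calc (∫ x in (0:ℝ)..(ε*l*c), (D+x)^(p-2)*x)
          ≤ (ε*l*c - 0) * ((D + ε*l*c)^(p-2) * (ε*l*c)) := h
        _ = ε*l*c * ((D + ε*l*c)^(p-2) * (ε*l*c)) := by ring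
    have F3 : phiFn p δ c ≤ c^2 * D^(p-2) := by
      rw [hDdef]; exact aux_phi_upper hp hδ hc
    have hψ2 : shiftPhi p δ c (ε*l*c) ≤ ε/4 * (l^2*c^2*D^(p-2)) := by
      calc shiftPhi p δ c (ε*l*c) ≤ ε*l*c * ((D + ε*l*c)^(p-2) * (ε*l*c)) := F1
        _ = ε^2*l^2*c^2 * (D + ε*l*c)^(p-2) := by ring
        _ ≤ ε^2*l^2*c^2 * (M * D^(p-2)) :=
            mul_le_mul_of_nonneg_left F2 (by positivity)
        _ = (ε^2*M) * (l^2*c^2*D^(p-2)) := by ring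
        _ = ε/4 * (l^2*c^2*D^(p-2)) := by rw [hε2M]
    have hY : (0:ℝ) ≤ l^2*c^2*D^(p-2) := by positivity
    have F3' : ε/4*l^2 * phiFn p δ c ≤ ε/4*l^2 * (c^2*D^(p-2)) :=
      mul_le_mul_of_nonneg_left F3 (by positivity)
    rw [h16]
    linarith [hψ2, F3', mul_nonneg hε0.le hY]
  · -- upper bound
    have hub : fconj (shiftPhi p δ c) (l * (D^(p-2)*c)) ≤ K*l*c * (l * (D^(p-2)*c)) :=
      aux_fconj_le (mul_nonneg hu0 ht0) helem
    have hlow : m/4 * (c^2 * D^(p-2)) ≤ phiFn p δ c := by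
      rw [hmdef, hDdef]; exact aux_phi_lower hp hδ hc
    have e : K*l^2*(c^2*D^(p-2)) ≤ 4*K/m * l^2 * phiFn p δ c := by
      have h := mul_le_mul_of_nonneg_left hlow
        (by positivity : (0:ℝ) ≤ 4*K/m * l^2)
      calc K*l^2*(c^2*D^(p-2)) = 4*K/m * l^2 * (m/4 * (c^2 * D^(p-2))) := by
            field_simp
        _ ≤ 4*K/m * l^2 * phiFn p δ c := h
    calc fconj (shiftPhi p δ c) (l * (D^(p-2)*c)) ≤ K*l*c * (l * (D^(p-2)*c)) := hub
      _ = K*l^2*(c^2*D^(p-2)) := by ring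
      _ ≤ 4*K/m * l^2 * phiFn p δ c := e
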